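/- If 𝔱 is a λ-term in normal form of type 2, then 𝔱 contains at most one bound variable of type 1, and every other bound variable occurring in 𝔱 has type 0. -/
import Mathlib


/-- The finite types: `0` is a finite type, and if `σ, τ` are finite types so is `σ → τ`. -/
inductive FType : Type
  | zero : FType
  | arrow : FType → FType → FType
deriving DecidableEq

/-- The standard types: `0` is standard, and if `σ` is standard then so is `σ → 0`. -/
inductive IsStd : FType → Prop
  | zero : IsStd FType.zero
  | arrow {σ : FType} : IsStd σ → IsStd (FType.arrow σ FType.zero)

/-- Type `1 = 0 → 0`. -/
def ty1 : FType := FType.arrow FType.zero FType.zero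

/-- Type `2 = 1 → 0`. -/
def ty2 : FType := FType.arrow ty1 FType.zero

/-- `L³`-terms, intrinsically typed: built from variables and parameter symbols of types
`0, 1, 2`, the constants `0, 1` of type `0`, and the operations `+`, `×` (of type `0×0→0`),
the application operators `·₀ : 1×0→0` and `·₁ : 2×1→0`, `* : 2×1→1` and `⌢ : 0×1→1`. -/
inductive LTerm : FType → Type
  | var0 (n : ℕ) : LTerm FType.zero
  | var1 (n : ℕ) : LTerm ty1
  | var2 (n : ℕ) : LTerm ty2
  | param0 (n : ℕ) : LTerm FType.zero
  | param1 (n : ℕ) : LTerm ty1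
  | param2 (n : ℕ) : LTerm ty2
  | czero : LTerm FType.zero
  | cone : LTerm FType.zero
  | add : LTerm FType.zero → LTerm FType.zero → LTerm FType.zero
  | mul : LTerm FType.zero → LTerm FType.zero → LTerm FType.zero
  | app0 : LTerm ty1 → LTerm FType.zero → LTerm FType.zero
  | app1 : LTerm ty2 → LTerm ty1 → LTerm FType.zero
  | star : LTerm ty2 → LTerm ty1 → LTerm ty1
  | cons : LTerm FType.zero → LTerm ty1 → LTerm ty1

/-- λ-terms (without the binder freshness side condition, which is recorded separately by
`LamWF`): every `L³`-term is a λ-term; λ-terms are closed under application; and `λx.(𝔱)`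
is a λ-term of type `ρ → σ` whenever `𝔱` is a λ-term of type `σ` and `x` is a variable of
type `ρ` (represented by its type `ρ` and an index `n : ℕ`). -/
inductive Lam : FType → Type
  | atom {σ : FType} : LTerm σ → Lam σ
  | app {σ τ : FType} : Lam (FType.arrow σ τ) → Lam σ → Lam τ
  | lam (ρ : FType) (n : ℕ) {τ : FType} : Lam τ → Lam (FType.arrow ρ τ)

/-- `lamOccurs ρ n t` says that the binder `λx` for the variable `x` of type `ρ` with index
`n` occurs somewhere in the λ-term `t` (i.e. `x` is a bound variable of `t`). -/
def lamOccurs (ρ : FType) (n : ℕ) : ∀ {σ : FType}, Lam σ → Prop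
  | _, Lam.atom _ => False
  | _, Lam.app t s => lamOccurs ρ n t ∨ lamOccurs ρ n s
  | _, Lam.lam ρ' m t => (ρ' = ρ ∧ m = n) ∨ lamOccurs ρ n t

/-- Well-formedness of a λ-term: at each abstraction `λx.(𝔱)`, the binder `λx` does not
already occur in `𝔱` (the side condition in the definition of λ-terms). -/
inductive LamWF : ∀ {σ : FType}, Lam σ → Prop
  | atom {σ : FType} (t : LTerm σ) : LamWF (Lam.atom t)
  | app {σ τ : FType} {t : Lam (FType.arrow σ τ)} {s : Lam σ} :
      LamWF t → LamWF s → LamWF (Lam.app t s)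
  | lam {ρ : FType} {n : ℕ} {τ : FType} {t : Lam τ} :
      LamWF t → ¬ lamOccurs ρ n t → LamWF (Lam.lam ρ n t)

/-- The subterm relation on `L³`-terms. -/
inductive LSub : ∀ {σ τ : FType}, LTerm σ → LTerm τ → Prop
  | refl {σ : FType} (t : LTerm σ) : LSub t t
  | addL {ρ : FType} {u : LTerm ρ} {a b : LTerm FType.zero} : LSub u a → LSub u (LTerm.add a b)
  | addR {ρ : FType} {u : LTerm ρ} {a b : LTerm FType.zero} : LSub u b → LSub u (LTerm.add a b)
  | mulL {ρ : FType} {u : LTerm ρ} {a b : LTerm FType.zero} : LSub u a → LSub u (LTerm.mul a b)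
  | mulR {ρ : FType} {u : LTerm ρ} {a b : LTerm FType.zero} : LSub u b → LSub u (LTerm.mul a b)
  | app0L {ρ : FType} {u : LTerm ρ} {f : LTerm ty1} {a : LTerm FType.zero} :
      LSub u f → LSub u (LTerm.app0 f a)
  | app0R {ρ : FType} {u : LTerm ρ} {f : LTerm ty1} {a : LTerm FType.zero} :
      LSub u a → LSub u (LTerm.app0 f a)
  | app1L {ρ : FType} {u : LTerm ρ} {f : LTerm ty2} {a : LTerm ty1} :
      LSub u f → LSub u (LTerm.app1 f a)
  | app1R {ρ : FType} {u : LTerm ρ} {f : LTerm ty2} {a : LTerm ty1} :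
      LSub u a → LSub u (LTerm.app1 f a)
  | starL {ρ : FType} {u : LTerm ρ} {f : LTerm ty2} {a : LTerm ty1} :
      LSub u f → LSub u (LTerm.star f a)
  | starR {ρ : FType} {u : LTerm ρ} {f : LTerm ty2} {a : LTerm ty1} :
      LSub u a → LSub u (LTerm.star f a)
  | consL {ρ : FType} {u : LTerm ρ} {k : LTerm FType.zero} {a : LTerm ty1} :
      LSub u k → LSub u (LTerm.cons k a)
  | consR {ρ : FType} {u : LTerm ρ} {k : LTerm FType.zero} {a : LTerm ty1} :
      LSub u a → LSub u (LTerm.cons k a)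

/-- The subterm relation on λ-terms (subterms of an `L³`-term, viewed as λ-terms, count as
subterms of the corresponding atomic λ-term). -/
inductive LamSub : ∀ {σ τ : FType}, Lam σ → Lam τ → Prop
  | refl {σ : FType} (t : Lam σ) : LamSub t t
  | atom {σ τ : FType} {u : LTerm σ} {t : LTerm τ} : LSub u t → LamSub (Lam.atom u) (Lam.atom t)
  | appL {ρ σ τ : FType} {u : Lam ρ} {t : Lam (FType.arrow σ τ)} {s : Lam σ} :
      LamSub u t → LamSub u (Lam.app t s)
  | appR {ρ σ τ : FType} {u : Lam ρ} {t : Lam (FType.arrow σ τ)} {s : Lam σ} :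
      LamSub u s → LamSub u (Lam.app t s)
  | lam {ρ' : FType} {n : ℕ} {ρ τ : FType} {u : Lam ρ} {t : Lam τ} :
      LamSub u t → LamSub u (Lam.lam ρ' n t)

/-- A λ-term is in normal form if it contains no subterm of the form `((λx.𝔰)(𝔲))`. -/
def NormalForm {σ : FType} (t : Lam σ) : Prop :=
  ∀ (ρ τ : FType) (n : ℕ) (s : Lam τ) (u : Lam ρ), ¬ LamSub (Lam.app (Lam.lam ρ n s) u) t

lemma normal_appL {σ τ : FType} {f : Lam (FType.arrow σ τ)} {a : Lam σ}
    (h : NormalForm (Lam.app f a)) : NormalForm f :=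
  fun ρ τ' n s u hs => h ρ τ' n s u (LamSub.appL hs)

lemma normal_appR {σ τ : FType} {f : Lam (FType.arrow σ τ)} {a : Lam σ}
    (h : NormalForm (Lam.app f a)) : NormalForm a :=
  fun ρ τ' n s u hs => h ρ τ' n s u (LamSub.appR hs)

lemma normal_lam {ρ : FType} {m : ℕ} {τ : FType} {b : Lam τ}
    (h : NormalForm (Lam.lam ρ m b)) : NormalForm b :=
  fun ρ' τ' n s u hs => h ρ' τ' n s u (LamSub.lam hs)

/-- Whether a λ-term is an application. -/
def isApp : ∀ {σ : FType}, Lam σ → Prop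
  | _, Lam.app _ _ => True
  | _, _ => False

lemma app_ty : ∀ {σ : FType} (t : Lam σ), NormalForm t → isApp t → σ = FType.zero := by
  intro σ t
  induction t with
  | atom u => intro _ h; exact h.elim
  | app f a ihf iha =>
    intro hnf _
    cases f with
    | atom u => cases u <;> rfl
    | app g b =>
      exact absurd (ihf (normal_appL hnf) trivial) (by intro h; cases h)
    | lam ρ m b =>
      exact absurd (LamSub.refl _) (hnf _ _ _ _ _)
  | lam ρ m b ih => intro _ h; exact h.elim

lemma occ_zero_one : ∀ {σ : FType} (t : Lam σ), NormalForm t →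
    (σ = FType.zero ∨ σ = ty1) → ∀ ρ n, lamOccurs ρ n t → ρ = FType.zero := by
  intro σ t
  induction t with
  | atom u => intro _ _ ρ n h; exact h.elim
  | app f a ihf iha =>
    intro hnf _ ρ n h
    cases f with
    | atom u =>
      rcases h with h | h
      · exact h.elim
      · cases u with
        | var1 m => exact iha (normal_appR hnf) (Or.inl rfl) ρ n h
        | param1 m => exact iha (normal_appR hnf) (Or.inl rfl) ρ n h
        | var2 m => exact iha (normal_appR hnf) (Or.inr rfl) ρ n h
        | param2 m => exact iha (normal_appR hnf) (Or.inr rfl) ρ n h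
        | star f' a' => exact iha (normal_appR hnf) (Or.inl rfl) ρ n h
        | cons k a' => exact iha (normal_appR hnf) (Or.inl rfl) ρ n h
    | app g b =>
      exact absurd (app_ty _ (normal_appL hnf) trivial) (by intro h; cases h)
    | lam ρ' m b =>
      exact absurd (LamSub.refl _) (hnf _ _ _ _ _)
  | lam ρ' m b ih =>
    intro hnf hσ ρ n h
    rcases hσ with hσ | hσ
    · cases hσ
    · rw [ty1] at hσ
      injection hσ with h1 h2
      subst h1; subst h2
      rcases h with ⟨h1, _⟩ | h
      · exact h1.symm
      · exact ih (normal_lam hnf) (Or.inl rfl) ρ n h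

/-- If `𝔱` is a λ-term in normal form of type `2`, then `𝔱` contains at most one bound
variable of type `1`, and every other bound variable occurring in `𝔱` has type `0`. -/
theorem bound_vars_type_two (t : Lam ty2) (hwf : LamWF t) (hnf : NormalForm t) :
    (∀ (ρ : FType) (n : ℕ), lamOccurs ρ n t → ρ = FType.zero ∨ ρ = ty1) ∧
    (∀ n m : ℕ, lamOccurs ty1 n t → lamOccurs ty1 m t → n = m) := by
  cases t with
  | atom u => exact ⟨fun ρ n h => h.elim, fun n m h => h.elim⟩
  | app f a =>
    exact absurd (app_ty _ hnf trivial) (by intro h; cases h)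
  | lam ρ' m b =>
    have hb : ∀ ρ n, lamOccurs ρ n b → ρ = FType.zero :=
      occ_zero_one b (normal_lam hnf) (Or.inl rfl) 
    constructor
    · intro ρ n h
      rcases h with ⟨h1, _⟩ | h
      · exact Or.inr h1.symm
      · exact Or.inl (hb ρ n h)
    · intro n m' h1 h2
      have f1 : n = m := by
        rcases h1 with ⟨_, h⟩ | h
        · omega
        · exact absurd (hb _ _ h) (by intro h; cases h)
      have f2 : m' = m := by
        rcases h2 with ⟨_, h⟩ | h
        · omega
        · exact absurd (hb _ _ h) (by intro h; cases h)
      omega
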